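/- arXiv:2003.04433 — 2 statements merged into one kernel-verified Lean document; each statement's English description precedes it below -/
import Mathlib

section
/- (Secondary characterization, quasiconvex-only case.) Let X₁,…,Xₙ ∈ ℝ^d and Q̃ := {(ψ(X₁),…,ψ(Xₙ)) : ψ : ℝ^d → ℝ quasiconvex}. Then z ∈ Q̃ if and only if there exist vectors ξ₁,…,ξₙ ∈ ℝ^d such that ξ_jᵀ(X_i − X_j) > 0 whenever z_i < z_j. -/
open Finset MeasureTheory

/-- Upper orthant of a set `A ⊆ ℝ^d`. -/
def UpOrth {d : ℕ} (A : Set (Fin d → ℝ)) : Set (Fin d → ℝ) :=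
  {y | ∃ x ∈ A, x ≤ y}

/-- Upper orthant of the convex hull. -/
def CvDag {d : ℕ} (A : Set (Fin d → ℝ)) : Set (Fin d → ℝ) :=
  UpOrth (convexHull ℝ A)

/-- Quasiconvexity: all lower level sets are convex. -/
def QConv {d : ℕ} (ψ : (Fin d → ℝ) → ℝ) : Prop :=
  ∀ α : ℝ, Convex ℝ {x : Fin d → ℝ | ψ x ≤ α}

/-- Coordinatewise decreasing. -/
def Decr {d : ℕ} (ψ : (Fin d → ℝ) → ℝ) : Prop :=
  ∀ x y : Fin d → ℝ, x ≤ y → ψ y ≤ ψ x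

/-! If `ψ` is quasiconvex, its strict sublevel set `{ψ < ψ (X j)}` is convex, contains every `X i`
with `z i < z j` and misses `X j`; so `X j` lies outside the convex hull of those points and
Hahn–Banach separation yields `ξ j`. Conversely, given the `ξ j`, take for `ψ` the pointwise
maximum over `j` of the function equal to `min z` on the open half-space
`{x | ξ j ⬝ᵥ X j < ξ j ⬝ᵥ x}` and to `z j` off it. Each of these is quasiconvex, hence so is `ψ`,
and the separation condition says exactly that the maximum at `X i` is attained by `j = i`. -/

theorem LinearMap.apply_eq_dotProduct {ι R : Type*} [CommSemiring R] [Fintype ι] [DecidableEq ι]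
    (f : (ι → R) →ₗ[R] R) (x : ι → R) : f x = (fun i => f (Pi.single i 1)) ⬝ᵥ x := by
  conv_lhs => rw [pi_eq_sum_univ' x]
  simp [dotProduct, mul_comm]

theorem quasiconvexOn_univ_ite {𝕜 E β : Type*} [Semiring 𝕜] [PartialOrder 𝕜] [AddCommMonoid E]
    [SMul 𝕜 E] [LinearOrder β] {U : Set E} [DecidablePred (· ∈ U)] (hU : Convex 𝕜 U) {a b : β}
    (hab : a ≤ b) : QuasiconvexOn 𝕜 Set.univ fun x => if x ∈ U then a else b := by
  refine quasiconvexOn_iff_le_max.2 ⟨convex_univ, fun x _ y _ s t hs ht hst => ?_⟩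
  by_cases hxy : x ∈ U ∧ y ∈ U
  · simp [hU hxy.1 hxy.2 hs ht hst, hxy]
  · split_ifs <;> simp_all

theorem QuasiconvexOn.exists_strongDual_lt {E : Type*} [AddCommGroup E] [Module ℝ E]
    [TopologicalSpace E] [T2Space E] [IsTopologicalAddGroup E] [ContinuousSMul ℝ E]
    [LocallyConvexSpace ℝ E] {ψ : E → ℝ} (hψ : QuasiconvexOn ℝ Set.univ ψ) {s : Set E}
    (hs : s.Finite) {p : E} (hlt : ∀ y ∈ s, ψ y < ψ p) :
    ∃ f : StrongDual ℝ E, ∀ y ∈ s, f p < f y := by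
  have hsub : convexHull ℝ s ⊆ {x ∈ Set.univ | ψ x < ψ p} :=
    convexHull_min (fun y hy => ⟨trivial, hlt y hy⟩) (hψ.convex_lt (ψ p))
  have hp : p ∉ convexHull ℝ s := fun hp => lt_irrefl _ (hsub hp).2
  obtain ⟨f, u, hfp, hfs⟩ := geometric_hahn_banach_point_closed (convex_convexHull ℝ s)
    (hs.isCompact_convexHull ℝ).isClosed hp
  exact ⟨f, fun y hy => hfp.trans (hfs y (subset_convexHull ℝ s hy))⟩

theorem QuasiconvexOn.exists_dotProduct_pos {ι : Type*} [Fintype ι] {ψ : (ι → ℝ) → ℝ}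
    (hψ : QuasiconvexOn ℝ Set.univ ψ) {s : Set (ι → ℝ)} (hs : s.Finite) {p : ι → ℝ}
    (hlt : ∀ y ∈ s, ψ y < ψ p) : ∃ ξ : ι → ℝ, ∀ y ∈ s, 0 < ξ ⬝ᵥ (y - p) := by
  classical
  obtain ⟨f, hf⟩ := hψ.exists_strongDual_lt hs hlt
  refine ⟨fun i => (f : (ι → ℝ) →ₗ[ℝ] ℝ) (Pi.single i 1), fun y hy => ?_⟩
  rw [← LinearMap.apply_eq_dotProduct, map_sub, sub_pos]
  exact hf y hy

theorem exists_quasiconvexOn_eq_of_convex_separating {𝕜 E ι β : Type*} [Semiring 𝕜]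
    [PartialOrder 𝕜] [AddCommMonoid E] [SMul 𝕜 E] [Fintype ι] [LinearOrder β] [Nonempty β]
    {X : ι → E} {z : ι → β} {U : ι → Set E} (hU : ∀ j, Convex 𝕜 (U j)) (hXU : ∀ j, X j ∉ U j)
    (hzU : ∀ i j, z i < z j → X i ∈ U j) :
    ∃ ψ : E → β, QuasiconvexOn 𝕜 Set.univ ψ ∧ ∀ i, ψ (X i) = z i := by
  classical
  rcases isEmpty_or_nonempty ι with hι | hι
  · exact ⟨fun _ => Classical.arbitrary β,
      quasiconvexOn_iff_le_max.2 ⟨convex_univ, by simp⟩, isEmptyElim⟩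
  set m := Finset.univ.inf' univ_nonempty z
  set g : ι → E → β := fun j x => if x ∈ U j then m else z j
  refine ⟨Finset.univ.sup' univ_nonempty g, ?_, fun i => ?_⟩
  · exact Finset.sup'_induction _ _ (fun _ hf _ hg => hf.sup hg)
      fun j _ => quasiconvexOn_univ_ite (hU j) (Finset.inf'_le _ (mem_univ j))
  · rw [Finset.sup'_apply]
    refine le_antisymm (Finset.sup'_le _ _ fun j _ => ?_) ?_
    · by_cases hj : X i ∈ U j
      · simpa [g, hj] using Finset.inf'_le z (mem_univ i)
      · simpa [g, hj] using not_lt.1 (mt (hzU i j) hj)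
    · exact Finset.le_sup'_of_le _ (mem_univ i) (by simp [g, hXU i])

theorem qConv_iff_quasiconvexOn {d : ℕ} {ψ : (Fin d → ℝ) → ℝ} :
    QConv ψ ↔ QuasiconvexOn ℝ Set.univ ψ := by
  simp only [QConv, QuasiconvexOn, Set.mem_univ, true_and]

theorem stmt_9 (d n : ℕ) (X : Fin n → (Fin d → ℝ)) (z : Fin n → ℝ) :
    (∃ ψ : (Fin d → ℝ) → ℝ, QConv ψ ∧ ∀ i, z i = ψ (X i)) ↔
    (∃ ξ : Fin n → (Fin d → ℝ),
      ∀ i j, z i < z j → 0 < ∑ k, ξ j k * (X i k - X j k)) := by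
  constructor
  · rintro ⟨ψ, hψ, hz⟩
    choose ξ hξ using fun j => (qConv_iff_quasiconvexOn.1 hψ).exists_dotProduct_pos
      (Set.toFinite (X '' {i | z i < z j})) (p := X j) (by rintro _ ⟨i, hi, rfl⟩; rwa [← hz, ← hz])
    exact ⟨ξ, fun i j hij => hξ j (X i) ⟨i, hij, rfl⟩⟩
  · rintro ⟨ξ, hξ⟩
    obtain ⟨ψ, hψ, hz⟩ := exists_quasiconvexOn_eq_of_convex_separating (𝕜 := ℝ) (X := X) (z := z)
      (U := fun j => {x | ξ j ⬝ᵥ X j < ξ j ⬝ᵥ x})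
      (fun j => convex_halfSpace_gt (dotProductBilin ℝ ℝ (ξ j)).isLinear _)
      (fun j => lt_irrefl (ξ j ⬝ᵥ X j))
      fun i j hij => by
        show ξ j ⬝ᵥ X j < ξ j ⬝ᵥ X i
        rw [← sub_pos, ← dotProduct_sub]
        exact hξ i j hij
    exact ⟨ψ, qConv_iff_quasiconvexOn.2 hψ, fun i => (hz i).symm⟩
end

section
/- The set Q of restrictions of quasiconvex decreasing functions to n design points is a closed subset of ℝⁿ, hence for any Y ∈ ℝⁿ the minimization of z ↦ Σ_{k=1}^n (Y_k − z_k)² over Q attains its infimum at some point of Q. -/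
open Finset MeasureTheory

/-!
A vector `z` is the trace of a quasiconvex decreasing function on the points `X i` iff it is
hull-dominated: whenever `X i ∈ CvDag (X '' S)`, some `j ∈ S` has `z i ≤ z j`. Necessity holds
because the sublevel sets of such a function are convex upper sets. For sufficiency take
`ψ x = min {z j | x ∈ CvDag (X '' {z ≤ z j})}`, capped by `max z`: its sublevel sets are unions of
a chain of convex upper sets. Hull domination is a finite intersection of finite unions of closed
sets `{z i ≤ z j}`, so the set of traces is closed, and a nonempty closed subset of `ℝⁿ` contains a
point nearest to `Y`.
-/

open Set

section CvDag

variable {d : ℕ}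

lemma subset_cvDag (A : Set (Fin d → ℝ)) : A ⊆ CvDag A :=
  fun x hx => ⟨x, subset_convexHull ℝ A hx, le_rfl⟩

lemma cvDag_mono : Monotone (CvDag (d := d)) :=
  fun _ _ h _ ⟨p, hp, hpx⟩ => ⟨p, convexHull_mono h hp, hpx⟩

@[simp]
lemma cvDag_empty : CvDag (∅ : Set (Fin d → ℝ)) = ∅ := by
  simp [CvDag, UpOrth]

lemma isUpperSet_cvDag (A : Set (Fin d → ℝ)) : IsUpperSet (CvDag A) :=
  fun _ _ hxy ⟨p, hp, hpx⟩ => ⟨p, hp, hpx.trans hxy⟩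

lemma convex_cvDag (A : Set (Fin d → ℝ)) : Convex ℝ (CvDag A) := by
  rintro y₁ ⟨x₁, hx₁, h₁⟩ y₂ ⟨x₂, hx₂, h₂⟩ a b ha hb hab
  exact ⟨a • x₁ + b • x₂, convex_convexHull ℝ A hx₁ hx₂ ha hb hab,
    add_le_add (smul_le_smul_of_nonneg_left h₁ ha) (smul_le_smul_of_nonneg_left h₂ hb)⟩

lemma cvDag_subset {A C : Set (Fin d → ℝ)} (hC : Convex ℝ C) (hC' : IsUpperSet C)
    (hAC : A ⊆ C) : CvDag A ⊆ C :=
  fun _ ⟨_, hp, hpx⟩ => hC' hpx (convexHull_min hAC hC hp)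

end CvDag

section QConvDecr

variable {d : ℕ} {ψ : (Fin d → ℝ) → ℝ}

lemma qConv_const (c : ℝ) : QConv (fun _ : Fin d → ℝ => c) := by
  intro α
  by_cases h : c ≤ α <;> simp [h, convex_univ, convex_empty]

lemma Decr.isUpperSet_setOf_le (hψ : Decr ψ) (α : ℝ) : IsUpperSet {x | ψ x ≤ α} :=
  fun x y hxy hx => (hψ x y hxy).trans hx

lemma exists_le_of_mem_cvDag (hq : QConv ψ) (hd : Decr ψ) {A : Set (Fin d → ℝ)}
    (hA : A.Finite) {x : Fin d → ℝ} (hx : x ∈ CvDag A) : ∃ a ∈ A, ψ x ≤ ψ a := by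
  have hne : A.Nonempty := nonempty_iff_ne_empty.2 fun h => by simp [h] at hx
  obtain ⟨a, ha, hmax⟩ := exists_max_image A ψ hA hne
  exact ⟨a, ha, cvDag_subset (hq (ψ a)) (hd.isUpperSet_setOf_le _) hmax hx⟩

end QConvDecr

section Extension

variable {ι : Type*} [Fintype ι] [Nonempty ι] {d : ℕ} (X : ι → (Fin d → ℝ)) (z : ι → ℝ)

noncomputable def qdExtension (x : Fin d → ℝ) : ℝ :=
  open Classical in
  Finset.univ.inf' Finset.univ_nonempty fun j =>
    if x ∈ CvDag (X '' {k | z k ≤ z j}) then z j else Finset.univ.sup' Finset.univ_nonempty z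

variable {X z}

lemma qdExtension_le_sup' (x : Fin d → ℝ) :
    qdExtension X z x ≤ Finset.univ.sup' Finset.univ_nonempty z := by
  refine Finset.inf'_le_of_le _ (Finset.mem_univ (Classical.arbitrary ι)) ?_
  split_ifs
  exacts [Finset.le_sup' z (Finset.mem_univ _), le_rfl]

lemma qdExtension_le_iff {α : ℝ} (hα : α < Finset.univ.sup' Finset.univ_nonempty z)
    (x : Fin d → ℝ) :
    qdExtension X z x ≤ α ↔ ∃ j, x ∈ CvDag (X '' {k | z k ≤ z j}) ∧ z j ≤ α := by
  simp only [qdExtension, Finset.inf'_le_iff, Finset.mem_univ, true_and]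
  refine exists_congr fun j => ?_
  split_ifs with h
  · simp [h]
  · simp [h, hα.not_ge]

lemma qConv_qdExtension : QConv (qdExtension X z) := by
  intro α
  rcases le_or_gt (Finset.univ.sup' Finset.univ_nonempty z) α with hα | hα
  · rw [show {x | qdExtension X z x ≤ α} = univ from
      eq_univ_of_forall fun x => (qdExtension_le_sup' x).trans hα]
    exact convex_univ
  have hunion : {x | qdExtension X z x ≤ α} =
      ⋃ j : {j // z j ≤ α}, CvDag (X '' {k | z k ≤ z j}) := by
    ext x
    simp [qdExtension_le_iff hα, and_comm]
  rw [hunion]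
  refine Directed.convex_iUnion (fun j k => ?_) fun j => convex_cvDag _
  rcases le_total (z j) (z k) with h | h
  · exact ⟨k, cvDag_mono (image_mono fun _ hl => le_trans hl h), le_rfl⟩
  · exact ⟨j, le_rfl, cvDag_mono (image_mono fun _ hl => le_trans hl h)⟩

lemma decr_qdExtension : Decr (qdExtension X z) := by
  intro x y hxy
  rcases le_or_gt (Finset.univ.sup' Finset.univ_nonempty z) (qdExtension X z x) with hα | hα
  · exact (qdExtension_le_sup' y).trans hα
  obtain ⟨j, hj, hzj⟩ := (qdExtension_le_iff hα x).1 le_rfl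
  exact (qdExtension_le_iff hα y).2 ⟨j, isUpperSet_cvDag _ hxy hj, hzj⟩

end Extension

section Restrictions

variable {ι : Type*} {d : ℕ}

def qdRestrictions (X : ι → (Fin d → ℝ)) : Set (ι → ℝ) :=
  {z | ∃ ψ : (Fin d → ℝ) → ℝ, QConv ψ ∧ Decr ψ ∧ ∀ i, z i = ψ (X i)}

def HullDominated (X : ι → (Fin d → ℝ)) (z : ι → ℝ) : Prop :=
  ∀ (S : Set ι) (i : ι), X i ∈ CvDag (X '' S) → ∃ j ∈ S, z i ≤ z j

variable {X : ι → (Fin d → ℝ)} {z : ι → ℝ}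

lemma const_mem_qdRestrictions (X : ι → (Fin d → ℝ)) (c : ℝ) :
    (fun _ => c) ∈ qdRestrictions X :=
  ⟨fun _ => c, qConv_const c, fun _ _ _ => le_rfl, fun _ => rfl⟩

lemma HullDominated.qdExtension_apply [Fintype ι] [Nonempty ι] (hz : HullDominated X z) (i : ι) :
    qdExtension X z (X i) = z i := by
  refine le_antisymm (Finset.inf'_le_of_le _ (Finset.mem_univ i) ?_) (Finset.le_inf' _ _ ?_)
  · rw [if_pos (subset_cvDag _ (Set.mem_image_of_mem X (le_refl (z i))))]
  · intro j _
    split_ifs with h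
    · obtain ⟨k, hk, hik⟩ := hz _ i h
      exact hik.trans hk
    · exact Finset.le_sup' z (Finset.mem_univ i)

lemma mem_qdRestrictions_iff [Fintype ι] : z ∈ qdRestrictions X ↔ HullDominated X z := by
  constructor
  · rintro ⟨ψ, hq, hd, hz⟩ S i hi
    obtain ⟨_, ⟨j, hj, rfl⟩, hij⟩ := exists_le_of_mem_cvDag hq hd (S.toFinite.image X) hi
    exact ⟨j, hj, by rwa [hz, hz]⟩
  · intro hz
    cases isEmpty_or_nonempty ι
    · exact Subsingleton.elim (fun _ => 0) z ▸ const_mem_qdRestrictions X 0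
    · exact ⟨qdExtension X z, qConv_qdExtension, decr_qdExtension,
        fun i => (hz.qdExtension_apply i).symm⟩

lemma isClosed_setOf_hullDominated [Finite ι] (X : ι → (Fin d → ℝ)) :
    IsClosed {z | HullDominated X z} := by
  simp only [HullDominated, ofPred_forall]
  refine isClosed_iInter fun S => isClosed_iInter fun i => ?_
  by_cases hi : X i ∈ CvDag (X '' S)
  · have hunion : IsClosed (⋃ j ∈ S, {z : ι → ℝ | z i ≤ z j}) :=
      S.toFinite.isClosed_biUnion fun j _ => isClosed_le (continuous_apply i) (continuous_apply j)
    convert hunion using 1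
    ext z
    simp [hi]
  · simp [hi]

lemma isClosed_qdRestrictions [Fintype ι] (X : ι → (Fin d → ℝ)) : IsClosed (qdRestrictions X) := by
  simpa only [← mem_qdRestrictions_iff, ofPred_mem_eq] using isClosed_setOf_hullDominated X

end Restrictions

lemma IsClosed.exists_sum_sq_sub_le {ι : Type*} [Fintype ι] {Q : Set (ι → ℝ)}
    (hQ : IsClosed Q) (hne : Q.Nonempty) (Y : ι → ℝ) :
    ∃ z ∈ Q, ∀ w ∈ Q, ∑ k, (Y k - z k) ^ 2 ≤ ∑ k, (Y k - w k) ^ 2 := by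
  let e := EuclideanSpace.equiv ι ℝ
  have hsq (v w : ι → ℝ) : ∑ k, (v k - w k) ^ 2 = dist (e.symm v) (e.symm w) ^ 2 := by
    simp [e, EuclideanSpace.dist_eq, Real.dist_eq, sq_abs, Real.sq_sqrt, Finset.sum_nonneg,
      sq_nonneg]
  obtain ⟨z, hz, hmin⟩ :=
    (hQ.preimage e.continuous).exists_infDist_eq_dist (hne.preimage e.surjective) (e.symm Y)
  refine ⟨e z, hz, fun w hw => ?_⟩
  rw [hsq, hsq, e.symm_apply_apply, ← hmin]
  exact pow_le_pow_left₀ Metric.infDist_nonneg (Metric.infDist_le_dist_of_mem (by simpa using hw)) 2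

theorem stmt_10 (d n : ℕ) (X : Fin n → (Fin d → ℝ)) :
    IsClosed {z : Fin n → ℝ |
        ∃ ψ : (Fin d → ℝ) → ℝ, QConv ψ ∧ Decr ψ ∧ ∀ i, z i = ψ (X i)} ∧
    ∀ Y : Fin n → ℝ,
      ∃ z ∈ {z : Fin n → ℝ |
          ∃ ψ : (Fin d → ℝ) → ℝ, QConv ψ ∧ Decr ψ ∧ ∀ i, z i = ψ (X i)},
        ∀ w ∈ {z : Fin n → ℝ |
            ∃ ψ : (Fin d → ℝ) → ℝ, QConv ψ ∧ Decr ψ ∧ ∀ i, z i = ψ (X i)},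
          ∑ k, (Y k - z k) ^ 2 ≤ ∑ k, (Y k - w k) ^ 2 :=
  ⟨isClosed_qdRestrictions X,
    (isClosed_qdRestrictions X).exists_sum_sq_sub_le ⟨_, const_mem_qdRestrictions X 0⟩⟩
end
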